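/- arXiv:1909.01306 — 2 statements merged into one kernel-verified Lean document; each statement's English description precedes it below -/
import Mathlib

section
/- Let n ≥ 3 be an odd integer. Then V(2,n) = (3n−3)/4 if n ≡ 1 (mod 4), and V(2,n) = (3n−5)/4 if n ≡ 3 (mod 4); moreover V((n+1)/2, n) = V(2,n). -/
/-- `(x, y) ∈ ℤ²` lies in the interior of the lattice parallelogram
`P_{a,n} = {t₁·(1,0) + t₂·(a,n) : 0 ≤ t₁, t₂ ≤ 1}`. -/
def inInteriorP (a n : ℤ) (p : ℤ × ℤ) : Prop :=
  ∃ t₁ t₂ : ℝ, 0 < t₁ ∧ t₁ < 1 ∧ 0 < t₂ ∧ t₂ < 1 ∧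
    (p.1 : ℝ) = t₁ + t₂ * (a : ℝ) ∧ (p.2 : ℝ) = t₂ * (n : ℝ)

/-- A lattice point `(x, y) ∈ ℤ²` is visible (from the origin) if `gcd(x, y) = 1`. -/
def VisiblePt (p : ℤ × ℤ) : Prop := Int.gcd p.1 p.2 = 1

/-- `V a n` is the number of visible lattice points in the interior of `P_{a,n}`. -/
noncomputable def V (a n : ℤ) : ℕ :=
  {p : ℤ × ℤ | inInteriorP a n p ∧ VisiblePt p}.ncard

/-
An interior lattice point of `P_{a,n}` at height `y` (`0 < y < n`) is unique: its abscissa is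
`⌊a y / n⌋ + 1`, because coprimality keeps `a y / n` from being an integer. Hence `V(a,n)` counts
the heights `y` with `gcd(⌊a y / n⌋ + 1, y) = 1`. For `n = 2m + 1` and `a = 2` the abscissa is `1`
for `y ≤ m` and `2` above, so the visible heights are `y ≤ m` and the odd `y > m`; for
`a = m + 1` it is `⌊y / 2⌋ + 1`, coprime to `y` exactly when `y` is odd or `4 ∣ y`. Both sets
have `m + ⌊m / 2⌋` elements.
-/

open Finset

theorem inInteriorP_iff_mul {a n : ℤ} (hn : 0 < n) (x y : ℤ) :
    inInteriorP a n (x, y) ↔ 0 < y ∧ y < n ∧ a * y < x * n ∧ x * n < a * y + n := by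
  have hnR : (0 : ℝ) < n := by exact_mod_cast hn
  constructor
  · rintro ⟨t₁, t₂, ht₁, ht₁', ht₂, ht₂', hx, hy⟩
    have key :
        (0 : ℝ) < y ∧ (y : ℝ) < n ∧ (a * y : ℝ) < x * n ∧ (x * n : ℝ) < a * y + n := by
      simp only at hx hy
      refine ⟨by rw [hy]; positivity, by rw [hy]; nlinarith, ?_, ?_⟩ <;>
        rw [hx, hy] <;> nlinarith
    exact_mod_cast key
  · rintro ⟨hy, hyn, hlt, hgt⟩
    have hlt' : (a * y : ℝ) < x * n := by exact_mod_cast hlt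
    have hgt' : (x * n : ℝ) < a * y + n := by exact_mod_cast hgt
    refine ⟨x - a * y / n, y / n, ?_, ?_, by positivity, ?_, by ring, by field_simp⟩
    · rw [sub_pos, div_lt_iff₀ hnR]; exact hlt'
    · rw [sub_lt_iff_lt_add, ← sub_lt_iff_lt_add', lt_div_iff₀ hnR]; linarith
    · rw [div_lt_one hnR]; exact_mod_cast hyn

theorem eq_ediv_add_one_iff_of_not_dvd {b n x : ℤ} (hn : 0 < n) (hb : ¬ n ∣ b) :
    x = b / n + 1 ↔ b < x * n ∧ x * n < b + n := by
  have hne : (x - 1) * n ≠ b := fun h => hb ⟨x - 1, by rw [← h, mul_comm]⟩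
  rw [eq_comm, ← eq_sub_iff_add_eq, Int.ediv_eq_iff_of_pos hn]
  constructor
  · rintro ⟨h₁, h₂⟩
    exact ⟨by linarith, by linarith [lt_of_le_of_ne h₁ hne]⟩
  · rintro ⟨h₁, h₂⟩
    exact ⟨by linarith, by linarith⟩

theorem inInteriorP_iff {a n : ℤ} (hn : 0 < n) (hcop : IsCoprime a n) (x y : ℤ) :
    inInteriorP a n (x, y) ↔ 0 < y ∧ y < n ∧ x = a * y / n + 1 := by
  rw [inInteriorP_iff_mul hn]
  refine and_congr_right fun hy => and_congr_right fun hyn => ?_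
  rw [eq_ediv_add_one_iff_of_not_dvd hn]
  intro hdvd
  have := Int.le_of_dvd hy (hcop.symm.dvd_of_dvd_mul_left hdvd)
  omega

theorem V_eq_card {a n : ℤ} (hn : 0 < n) (hcop : IsCoprime a n) :
    V a n = #{y ∈ Ioo 0 n | IsCoprime (a * y / n + 1) y} := by
  have hset : {p : ℤ × ℤ | inInteriorP a n p ∧ VisiblePt p} =
      (fun y => (a * y / n + 1, y)) '' ↑{y ∈ Ioo 0 n | IsCoprime (a * y / n + 1) y} := by
    ext ⟨x, y⟩
    simp only [Set.mem_ofPred_eq, inInteriorP_iff hn hcop, VisiblePt, coe_filter, mem_Ioo,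
      Set.mem_image, Prod.mk.injEq, ← Int.isCoprime_iff_gcd_eq_one]
    constructor
    · rintro ⟨⟨hy, hyn, rfl⟩, hvis⟩
      exact ⟨y, ⟨⟨hy, hyn⟩, hvis⟩, rfl, rfl⟩
    · rintro ⟨y, ⟨⟨hy, hyn⟩, hvis⟩, rfl, rfl⟩
      exact ⟨⟨hy, hyn, rfl⟩, hvis⟩
  rw [V, hset, Set.ncard_image_of_injective _ fun u v h => (Prod.mk.inj h).2, Set.ncard_coe_finset]

theorem isCoprime_two_mul_ediv_add_one_iff {m y : ℤ} (hy : 0 ≤ y) (hyn : y < 2 * m + 1) :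
    IsCoprime (2 * y / (2 * m + 1) + 1) y ↔ y ≤ m ∨ Odd y := by
  by_cases hym : y ≤ m
  · rw [Int.ediv_eq_zero_of_lt (by omega) (by omega)]
    exact iff_of_true isCoprime_one_left (Or.inl hym)
  · have h : 2 * y / (2 * m + 1) = 1 :=
      (Int.ediv_eq_iff_of_pos (by omega)).mpr ⟨by omega, by omega⟩
    rw [h, one_add_one_eq_two, Int.prime_two.coprime_iff_not_dvd, Int.odd_iff]
    omega

theorem succ_mul_ediv_two_mul_add_one {m y : ℤ} (hy : 0 ≤ y) (hyn : y < 2 * m + 1) :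
    (m + 1) * y / (2 * m + 1) = y / 2 := by
  rw [Int.ediv_eq_iff_of_pos (by omega)]
  obtain ⟨q, rfl | rfl⟩ : ∃ q, y = 2 * q ∨ y = 2 * q + 1 := ⟨y / 2, by omega⟩
  · rw [show 2 * q / 2 = q by omega]; constructor <;> nlinarith
  · rw [show (2 * q + 1) / 2 = q by omega]; constructor <;> nlinarith

theorem isCoprime_ediv_two_add_one_iff (y : ℤ) : IsCoprime (y / 2 + 1) y ↔ Odd y ∨ 4 ∣ y := by
  obtain ⟨q, rfl | rfl⟩ : ∃ q, y = 2 * q ∨ y = 2 * q + 1 := ⟨y / 2, by omega⟩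
  · rw [show 2 * q / 2 = q by omega, show 2 * q = -2 + (q + 1) * 2 by ring,
      IsCoprime.add_mul_left_right_iff, IsCoprime.neg_right_iff, isCoprime_comm,
      Int.prime_two.coprime_iff_not_dvd]
    simp only [Int.odd_iff]
    omega
  · rw [show (2 * q + 1) / 2 = q by omega]
    exact iff_of_true ⟨2, -1, by ring⟩ (Or.inl ⟨q, rfl⟩)

theorem card_filter_le_or_odd {m : ℤ} (hm : 0 ≤ m) :
    (#{y ∈ Ioo 0 (2 * m + 1) | y ≤ m ∨ Odd y} : ℤ) = m + m / 2 := by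
  have hbad :
      {y ∈ Ioo 0 (2 * m + 1) | ¬ (y ≤ m ∨ Odd y)} = (Ioc (m / 2) m).image (2 * ·) := by
    ext y
    simp only [mem_filter, mem_Ioo, mem_image, mem_Ioc, Int.odd_iff]
    constructor
    · rintro ⟨⟨h0, h1⟩, h2⟩
      exact ⟨y / 2, ⟨by omega, by omega⟩, by omega⟩
    · rintro ⟨z, ⟨hz1, hz2⟩, rfl⟩
      omega
  have hcard :=
    card_filter_add_card_filter_not (s := Ioo 0 (2 * m + 1)) (fun y => y ≤ m ∨ Odd y)
  rw [hbad, card_image_of_injective _ fun u v h => by simpa using h, Int.card_Ioc,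
    Int.card_Ioo] at hcard
  omega

theorem card_filter_odd_or_four_dvd {m : ℤ} (hm : 0 ≤ m) :
    (#{y ∈ Ioo 0 (2 * m + 1) | Odd y ∨ 4 ∣ y} : ℤ) = m + m / 2 := by
  have hbad : {y ∈ Ioo 0 (2 * m + 1) | ¬ (Odd y ∨ 4 ∣ y)} =
      (Ico 0 ((m + 1) / 2)).image (4 * · + 2) := by
    ext y
    simp only [mem_filter, mem_Ioo, mem_image, mem_Ico, Int.odd_iff]
    constructor
    · rintro ⟨⟨h0, h1⟩, h2⟩
      exact ⟨y / 4, ⟨by omega, by omega⟩, by omega⟩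
    · rintro ⟨z, ⟨hz1, hz2⟩, rfl⟩
      omega
  have hcard :=
    card_filter_add_card_filter_not (s := Ioo 0 (2 * m + 1)) (fun y => Odd y ∨ 4 ∣ y)
  rw [hbad, card_image_of_injective _ fun u v h => by simpa using h, Int.card_Ico,
    Int.card_Ioo] at hcard
  omega

theorem V_two_two_mul_add_one {m : ℤ} (hm : 0 ≤ m) : (V 2 (2 * m + 1) : ℤ) = m + m / 2 := by
  rw [V_eq_card (by omega) ⟨-m, 1, by ring⟩, ← card_filter_le_or_odd hm]
  congr 2
  exact filter_congr fun y hy => by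
    rw [mem_Ioo] at hy; exact isCoprime_two_mul_ediv_add_one_iff hy.1.le hy.2

theorem V_succ_two_mul_add_one {m : ℤ} (hm : 0 ≤ m) :
    (V (m + 1) (2 * m + 1) : ℤ) = m + m / 2 := by
  rw [V_eq_card (by omega) ⟨2, -1, by ring⟩, ← card_filter_odd_or_four_dvd hm]
  congr 2
  exact filter_congr fun y hy => by
    rw [mem_Ioo] at hy
    rw [succ_mul_ediv_two_mul_add_one hy.1.le hy.2, isCoprime_ediv_two_add_one_iff]

/-- For odd `n ≥ 3`: `V(2,n) = (3n−3)/4` if `n ≡ 1 (mod 4)`,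
`V(2,n) = (3n−5)/4` if `n ≡ 3 (mod 4)`, and `V((n+1)/2, n) = V(2,n)`. -/
theorem V_two (n : ℤ) (hn : 3 ≤ n) (hodd : Odd n) :
    (n % 4 = 1 → 4 * (V 2 n : ℤ) = 3 * n - 3) ∧
      (n % 4 = 3 → 4 * (V 2 n : ℤ) = 3 * n - 5) ∧
      V ((n + 1) / 2) n = V 2 n := by
  obtain ⟨m, rfl⟩ := hodd
  have hm : 0 ≤ m := by omega
  have hV := V_two_two_mul_add_one hm
  refine ⟨fun h => by omega, fun h => by omega, ?_⟩
  rw [show (2 * m + 1 + 1) / 2 = m + 1 by omega]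
  exact_mod_cast (V_succ_two_mul_add_one hm).trans hV.symm
end

section
/- Let a, n be positive integers with 1 ≤ a < n and gcd(a,n) = 1. Then, as an identity of real numbers, V(a,n) + 1 = (n/a)·Σ_{s=1}^{a} φ(s)/s + Σ_{s=1}^{a} Σ_{d | s} μ(d)·( ⟨(s−1)·n/(a·d)⟩ − ⟨s·n/(a·d)⟩ ), where the inner sum is over the positive divisors d of s. -/
open Finset ArithmeticFunction ArithmeticFunction.Moebius
open scoped Nat

theorem sum_moebius_divisors (m : ℕ) : ∑ d ∈ m.divisors, μ d = if m = 1 then 1 else 0 := by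
  rw [← coe_mul_zeta_apply, moebius_mul_coe_zeta, one_apply]

theorem ite_gcd_eq_one_eq_sum_moebius {s : ℕ} (hs : s ≠ 0) (k : ℤ) :
    (if Int.gcd s k = 1 then 1 else 0 : ℤ) = ∑ d ∈ s.divisors with ((d : ℕ) : ℤ) ∣ k, μ d := by
  have hdiv : (Int.gcd s k).divisors = {d ∈ s.divisors | ((d : ℕ) : ℤ) ∣ k} := by
    ext d
    simp [Int.dvd_gcd_iff, Int.natCast_dvd_natCast, hs]
  rw [← hdiv, sum_moebius_divisors]

theorem card_filter_dvd_Ioc {L R : ℤ} (h : L ≤ R) {r : ℤ} (hr : 0 < r) :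
    (#{k ∈ Ioc L R | r ∣ k} : ℤ) = R / r - L / r := by
  rw [Int.Ioc_filter_dvd_card _ _ hr, Int.floor_div_cast_of_nonneg hr.le,
    Int.floor_div_cast_of_nonneg hr.le, Int.floor_intCast, Int.floor_intCast,
    max_eq_left (sub_nonneg.2 (Int.ediv_le_ediv hr h))]

theorem card_filter_coprime_Ioc {s : ℕ} (hs : s ≠ 0) {L R : ℤ} (h : L ≤ R) :
    (#{k ∈ Ioc L R | Int.gcd s k = 1} : ℤ) = ∑ d ∈ s.divisors, μ d * (R / d - L / d) := by
  calc (#{k ∈ Ioc L R | Int.gcd s k = 1} : ℤ)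
      = ∑ k ∈ Ioc L R, ∑ d ∈ s.divisors with ((d : ℕ) : ℤ) ∣ k, μ d := by
        rw [card_filter, Nat.cast_sum]
        exact sum_congr rfl fun k _ => by push_cast; exact ite_gcd_eq_one_eq_sum_moebius hs k
    _ = ∑ d ∈ s.divisors, ∑ k ∈ Ioc L R with ((d : ℕ) : ℤ) ∣ k, μ d := by
        simp_rw [sum_filter]
        exact sum_comm
    _ = ∑ d ∈ s.divisors, μ d * (R / d - L / d) := by
        refine sum_congr rfl fun d hd => ?_
        rw [sum_const, nsmul_eq_mul, mul_comm,
          card_filter_dvd_Ioc h (by exact_mod_cast Nat.pos_of_mem_divisors hd)]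

theorem sum_moebius_div_eq_totient_div (s : ℕ) :
    ∑ d ∈ s.divisors, (μ d : ℝ) / d = φ s / s := by
  rcases Nat.eq_zero_or_pos s with rfl | hs
  · simp
  have hsum : ∀ m : ℕ, m > 0 → ∑ i ∈ m.divisors, (φ i : ℝ) = m := fun m _ => by
    exact_mod_cast Nat.sum_totient m
  have hinv := sum_eq_iff_sum_mul_moebius_eq.1 hsum s hs
  rw [Nat.sum_divisorsAntidiagonal (fun d e => (μ d : ℝ) * (e : ℝ))] at hinv
  rw [← hinv, eq_div_iff (by positivity), sum_mul]
  refine sum_congr rfl fun d hd => ?_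
  have hd₀ : (d : ℝ) ≠ 0 := by exact_mod_cast (Nat.pos_of_mem_divisors hd).ne'
  rw [Nat.cast_div (Nat.dvd_of_mem_divisors hd) hd₀]
  ring

theorem card_filter_coprime_Ioc_floor {s : ℕ} (hs : s ≠ 0) {x y : ℝ} (hxy : x ≤ y) :
    (#{k ∈ Ioc ⌊x⌋ ⌊y⌋ | Int.gcd s k = 1} : ℝ) =
      (y - x) * (φ s / s) + ∑ d ∈ s.divisors, μ d * (Int.fract (x / d) - Int.fract (y / d)) := by
  have hcount := card_filter_coprime_Ioc hs (Int.floor_mono hxy)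
  simp_rw [← Int.floor_div_natCast] at hcount
  rw [← Int.cast_natCast, hcount, ← sum_moebius_div_eq_totient_div, mul_sum, ← sum_add_distrib]
  push_cast
  refine sum_congr rfl fun d _ => ?_
  rw [← Int.self_sub_fract (y / d), ← Int.self_sub_fract (x / d)]
  ring

theorem inInteriorP_iff_s17 {a n : ℤ} (hn : 0 < n) {p : ℤ × ℤ} :
    inInteriorP a n p ↔ 0 < p.2 ∧ p.2 < n ∧ a * p.2 < p.1 * n ∧ (p.1 - 1) * n < a * p.2 := by
  have hn' : (0 : ℝ) < n := by exact_mod_cast hn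
  constructor
  · rintro ⟨t₁, t₂, h₁, h₁', h₂, h₂', hx, hy⟩
    refine ⟨?_, ?_, ?_, ?_⟩ <;> rify <;> simp only [hx, hy] <;> nlinarith
  · rintro ⟨h₁, h₂, h₃, h₄⟩
    rify at h₁ h₂ h₃ h₄
    refine ⟨p.1 - a * p.2 / n, p.2 / n, ?_, ?_, by positivity, (div_lt_one hn').2 h₂,
      by field_simp; ring, by field_simp⟩
    · rw [sub_pos, div_lt_iff₀ hn']; linarith
    · rw [sub_lt_comm, lt_div_iff₀ hn']; linarith

theorem IsCoprime.eq_of_mul_eq_mul {a n x y : ℤ} (h : IsCoprime a n) (hx : 0 < x)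
    (hxa : x ≤ a) (hxy : a * y = x * n) : x = a ∧ y = n := by
  have hax : a ∣ x := h.dvd_of_dvd_mul_right ⟨y, hxy.symm⟩
  obtain rfl : x = a := le_antisymm hxa (Int.le_of_dvd hx hax)
  exact ⟨rfl, mul_left_cancel₀ hx.ne' hxy⟩

/-- The visible lattice points `(s, k)` with `1 ≤ s ≤ a` and `(s - 1) n < a k ≤ s n`: the interior
of `P_{a,n}` together with its vertex `(a, n)`. -/
noncomputable def visibleStrip (a n : ℕ) : Finset (ℤ × ℤ) :=
  (Icc 1 a).biUnion fun s =>
    {k ∈ Ioc ⌊((s : ℝ) - 1) * n / a⌋ ⌊(s : ℝ) * n / a⌋ | Int.gcd s k = 1}.map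
      (Function.Embedding.sectR (s : ℤ) ℤ)

theorem card_visibleStrip (a n : ℕ) :
    #(visibleStrip a n) = ∑ s ∈ Icc 1 a,
      #{k ∈ Ioc ⌊((s : ℝ) - 1) * n / a⌋ ⌊(s : ℝ) * n / a⌋ | Int.gcd s k = 1} := by
  rw [visibleStrip, card_biUnion]
  · simp only [card_map]
  · intro s _ t _ hst
    simp only [Function.onFun, disjoint_left, mem_map, Function.Embedding.sectR_apply]
    rintro _ ⟨k, _, rfl⟩ ⟨l, _, hl⟩
    simp only [Prod.mk.injEq] at hl
    exact hst (by exact_mod_cast hl.1.symm)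

theorem mem_visibleStrip {a n : ℕ} (ha : 0 < a) {p : ℤ × ℤ} :
    p ∈ visibleStrip a n ↔
      (1 ≤ p.1 ∧ p.1 ≤ a ∧ (p.1 - 1) * n < a * p.2 ∧ a * p.2 ≤ p.1 * n) ∧ VisiblePt p := by
  have ha' : (0 : ℝ) < a := by exact_mod_cast ha
  obtain ⟨x, y⟩ := p
  simp only [visibleStrip, mem_biUnion, mem_map, mem_filter, mem_Ioc, mem_Icc,
    Function.Embedding.sectR_apply, Prod.mk.injEq, Int.floor_lt, Int.le_floor,
    div_lt_iff₀ ha', le_div_iff₀ ha', VisiblePt]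
  constructor
  · rintro ⟨s, ⟨hs₁, hsa⟩, k, ⟨⟨hk₁, hk₂⟩, hcop⟩, rfl, rfl⟩
    refine ⟨⟨by exact_mod_cast hs₁, by exact_mod_cast hsa, ?_, ?_⟩, hcop⟩ <;> rify <;> linarith
  · rintro ⟨⟨hx₁, hxa, hy₁, hy₂⟩, hcop⟩
    lift x to ℕ using by omega
    refine ⟨x, ⟨by exact_mod_cast hx₁, by exact_mod_cast hxa⟩, y, ⟨⟨?_, ?_⟩, hcop⟩, rfl, rfl⟩ <;>
      rify at hy₁ hy₂ <;> linarith

theorem setOf_inInteriorP_and_visiblePt_eq {a n : ℕ} (ha : 0 < a) (hn : 0 < n) (hcop : Nat.Coprime a n) :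
    {p : ℤ × ℤ | inInteriorP a n p ∧ VisiblePt p} = ↑((visibleStrip a n).erase (a, n)) := by
  have hcop' : IsCoprime (a : ℤ) n := Nat.isCoprime_iff_coprime.2 hcop
  ext ⟨x, y⟩
  simp only [Set.mem_ofPred_eq, coe_erase, Set.mem_sdiff, mem_coe, Set.mem_singleton_iff,
    mem_visibleStrip ha, inInteriorP_iff_s17 (Int.natCast_pos.2 hn), Prod.mk.injEq]
  constructor
  · rintro ⟨⟨hy₀, hyn, hlt, hgt⟩, hvis⟩
    refine ⟨⟨⟨by nlinarith, by nlinarith, hgt, hlt.le⟩, hvis⟩, ?_⟩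
    rintro ⟨rfl, rfl⟩
    exact lt_irrefl _ hlt
  · rintro ⟨⟨⟨hx₁, hxa, hgt, hle⟩, hvis⟩, hne⟩
    have hlt : (a : ℤ) * y < x * n :=
      hle.lt_of_ne fun heq => hne (hcop'.eq_of_mul_eq_mul (by omega) hxa heq)
    exact ⟨⟨by nlinarith, by nlinarith, hlt, hgt⟩, hvis⟩

theorem V_add_one {a n : ℕ} (ha : 0 < a) (hn : 0 < n) (hcop : Nat.Coprime a n) :
    V a n + 1 = #(visibleStrip a n) := by
  have hvertex : ((a : ℤ), (n : ℤ)) ∈ visibleStrip a n :=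
    (mem_visibleStrip ha).2 ⟨⟨by omega, le_rfl, by nlinarith, le_rfl⟩,
      by simpa [VisiblePt] using hcop⟩
  rw [V, setOf_inInteriorP_and_visiblePt_eq ha hn hcop, Set.ncard_coe_finset, card_erase_add_one hvertex]

open ArithmeticFunction ArithmeticFunction.Moebius in
/-- `V(a,n) + 1 = (n/a)·Σ_{s=1}^{a} φ(s)/s
  + Σ_{s=1}^{a} Σ_{d ∣ s} μ(d)·(⟨(s−1)n/(ad)⟩ − ⟨sn/(ad)⟩)`,
as an identity of real numbers, where `⟨·⟩` is the fractional part. -/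
theorem V_formula (a n : ℕ) (ha : 1 ≤ a) (han : a < n) (hgcd : Nat.gcd a n = 1) :
    (V a n : ℝ) + 1 =
      (n : ℝ) / (a : ℝ) * ∑ s ∈ Finset.Icc 1 a, (Nat.totient s : ℝ) / (s : ℝ) +
        ∑ s ∈ Finset.Icc 1 a, ∑ d ∈ Nat.divisors s,
          (μ d : ℝ) *
            (Int.fract (((s : ℝ) - 1) * n / (a * d)) -
              Int.fract ((s : ℝ) * n / (a * d))) := by
  have hcolumn : ∀ s ∈ Icc 1 a,
      (#{k ∈ Ioc ⌊((s : ℝ) - 1) * n / a⌋ ⌊(s : ℝ) * n / a⌋ | Int.gcd s k = 1} : ℝ) =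
        n / a * (φ s / s) + ∑ d ∈ s.divisors,
          μ d * (Int.fract (((s : ℝ) - 1) * n / (a * d)) - Int.fract ((s : ℝ) * n / (a * d))) := by
    intro s hs
    rw [card_filter_coprime_Ioc_floor (by grind) (by gcongr; linarith)]
    simp only [div_div]
    ring
  have hV : (V a n : ℝ) + 1 = #(visibleStrip a n) := by
    exact_mod_cast V_add_one (by omega) (by omega) hgcd
  rw [hV, card_visibleStrip, Nat.cast_sum, sum_congr rfl hcolumn, sum_add_distrib, mul_sum]
end
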